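/- For every positive integer n and every integer i with 0 ≤ i ≤ n, (2^i·3^{n-i-1} + 3^i)/2^{n+1} ≥ (1.11)^n/6. Equivalently, (1/6)·((3/2)^{n-i} + 3^{i+1}/2^n) ≥ (1.11)^n/6. -/

import Mathlib

/-!
Write the quantity as `((3/2)^(n-i) + 3^(i+1)/2^n) / 6`. If `n - i ≥ 0.27 n`, the first summand
already exceeds `1.11^n` because `1.11^100 ≤ 1.5^27`; otherwise `i + 1 > 0.73 n`, and the second
summand exceeds `1.11^n = 2.22^n / 2^n` because `2.22^100 ≤ 3^73`.
-/

theorem pow_le_pow_of_pow_le_pow {a b : ℝ} {p q n k : ℕ} (ha : 0 ≤ a) (hb : 1 ≤ b) (hp : p ≠ 0)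
    (hab : a ^ p ≤ b ^ q) (hnk : q * n ≤ p * k) : a ^ n ≤ b ^ k := by
  refine le_of_pow_le_pow_left₀ hp (by positivity) ?_
  calc (a ^ n) ^ p = (a ^ p) ^ n := by rw [← pow_mul, ← pow_mul, mul_comm]
    _ ≤ (b ^ q) ^ n := by gcongr
    _ = b ^ (q * n) := by rw [← pow_mul]
    _ ≤ b ^ (p * k) := pow_le_pow_right₀ hb hnk
    _ = (b ^ k) ^ p := by rw [← pow_mul, mul_comm]

theorem one_point_one_one_pow_le (n i : ℕ) (hi : i ≤ n) :
    (1.11 : ℝ) ^ n ≤ (3 / 2 : ℝ) ^ (n - i) + (3 : ℝ) ^ (i + 1) / 2 ^ n := by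
  rcases le_or_gt (27 * n) (100 * (n - i)) with h | h
  · have hfirst : (1.11 : ℝ) ^ n ≤ (3 / 2 : ℝ) ^ (n - i) :=
      pow_le_pow_of_pow_le_pow (by norm_num) (by norm_num) (by norm_num) (by norm_num) h
    have : (0 : ℝ) ≤ (3 : ℝ) ^ (i + 1) / 2 ^ n := by positivity
    linarith
  · have h222 : (2.22 : ℝ) ^ n ≤ 3 ^ (i + 1) :=
      pow_le_pow_of_pow_le_pow (by norm_num) (by norm_num) (by norm_num) (by norm_num)
        (by omega : 73 * n ≤ 100 * (i + 1))
    have hsecond : (1.11 : ℝ) ^ n ≤ (3 : ℝ) ^ (i + 1) / 2 ^ n := by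
      rw [le_div_iff₀ (by positivity), ← mul_pow]
      exact (show (1.11 : ℝ) * 2 = 2.22 by norm_num) ▸ h222
    have : (0 : ℝ) ≤ (3 / 2 : ℝ) ^ (n - i) := by positivity
    linarith

theorem two_pow_mul_three_zpow_add_three_pow_div (n i : ℕ) (hi : i ≤ n) :
    ((2 : ℝ) ^ i * (3 : ℝ) ^ ((n : ℤ) - i - 1) + 3 ^ i) / 2 ^ (n + 1)
      = (1 / 6 : ℝ) * ((3 / 2 : ℝ) ^ (n - i) + (3 : ℝ) ^ (i + 1) / 2 ^ n) := by
  obtain ⟨k, rfl⟩ := Nat.exists_eq_add_of_le hi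
  have hexp : ((i + k : ℕ) : ℤ) - i - 1 = (k : ℤ) - 1 := by push_cast; ring
  rw [hexp, zpow_sub₀ (by norm_num), zpow_natCast, zpow_one, Nat.add_sub_cancel_left, div_pow]
  field_simp
  ring

theorem min_prophet_ratio_bound_general (n i : ℕ) (hi : i ≤ n) :
    ((2 : ℝ) ^ i * (3 : ℝ) ^ ((n : ℤ) - i - 1) + 3 ^ i) / 2 ^ (n + 1)
      ≥ (1.11 : ℝ) ^ n / 6 ∧
    (1 / 6 : ℝ) * ((3 / 2 : ℝ) ^ (n - i) + (3 : ℝ) ^ (i + 1) / 2 ^ n)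
      ≥ (1.11 : ℝ) ^ n / 6 := by
  have hbound : (1 / 6 : ℝ) * ((3 / 2 : ℝ) ^ (n - i) + (3 : ℝ) ^ (i + 1) / 2 ^ n)
      ≥ (1.11 : ℝ) ^ n / 6 := by
    linarith [one_point_one_one_pow_le n i hi]
  exact ⟨two_pow_mul_three_zpow_add_three_pow_div n i hi ▸ hbound, hbound⟩

theorem min_prophet_ratio_bound (n i : ℕ) (hn : 1 ≤ n) (hi : i ≤ n) :
    ((2 : ℝ) ^ i * (3 : ℝ) ^ ((n : ℤ) - i - 1) + 3 ^ i) / 2 ^ (n + 1)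
      ≥ (1.11 : ℝ) ^ n / 6 ∧
    (1 / 6 : ℝ) * ((3 / 2 : ℝ) ^ (n - i) + (3 : ℝ) ^ (i + 1) / 2 ^ n)
      ≥ (1.11 : ℝ) ^ n / 6 :=
  min_prophet_ratio_bound_general n i hi
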